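/- arXiv:2011.02325 — 5 statements merged into one kernel-verified Lean document; each statement's English description precedes it below -/
import Mathlib

section
/- Let (X, C, k) be an instance of Weighted 2-SAT. Let C_1 be the 2-CNF over X consisting of the unit clauses (¬x) for every x ∈ X, and let C_2 = C. Then C has a satisfying assignment setting at most k variables to true if and only if the Multistage 2-SAT instance (X, (C_1, C_2), k) is a yes-instance. -/
/-- A CNF formula: a list of clauses, each clause a list of literals `(variable, sign)`. -/
abbrev CNF (V : Type) := List (List (V × Bool))

/-- `f` satisfies the CNF `C`: every clause contains a literal evaluating to true. -/
def SatCNF {V : Type} (f : V → Bool) (C : CNF V) : Prop :=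
  ∀ cl ∈ C, ∃ l ∈ cl, f l.1 = l.2

/-- Hamming distance between two truth assignments. -/
def hdiff {V : Type} [Fintype V] (f g : V → Bool) : ℕ :=
  (Finset.univ.filter fun x => f x ≠ g x).card

/-- Yes-instance of Multistage SAT, stages given as a list of CNF formulas. -/
def MSatYes {V : Type} [Fintype V] (Φ : List (CNF V)) (d : ℕ) : Prop :=
  ∃ f : Fin Φ.length → V → Bool,
    (∀ i, SatCNF (f i) (Φ.get i)) ∧
    ∀ (i : ℕ) (h : i + 1 < Φ.length),
      hdiff (f ⟨i, Nat.lt_of_succ_lt h⟩) (f ⟨i + 1, h⟩) ≤ d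

/-- Yes-instance of Multistage SAT, stages given as a function `Fin τ → CNF V`. -/
def MSatYesF {V : Type} [Fintype V] (τ : ℕ) (Φ : Fin τ → CNF V) (d : ℕ) : Prop :=
  ∃ f : Fin τ → V → Bool,
    (∀ i, SatCNF (f i) (Φ i)) ∧
    ∀ (i : ℕ) (h : i + 1 < τ),
      hdiff (f ⟨i, Nat.lt_of_succ_lt h⟩) (f ⟨i + 1, h⟩) ≤ d

/-- A 2-CNF: every clause has at most two literals. -/
def Is2CNF {V : Type} (C : CNF V) : Prop := ∀ cl ∈ C, cl.length ≤ 2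

/-! The unit clauses `¬x` force the first-stage assignment to be constantly false, and the
Hamming distance from the all-false assignment is the number of variables set to true. -/

theorem satCNF_map_unit_iff {V : Type} (f : V → Bool) (l : List V) (b : Bool) :
    SatCNF f (l.map fun x => [(x, b)]) ↔ ∀ x ∈ l, f x = b := by
  simp [SatCNF]

theorem satCNF_all_negative_iff {V : Type} [Fintype V] (f : V → Bool) :
    SatCNF f (Finset.univ.toList.map fun x : V => [(x, false)]) ↔ f = fun _ => false := by
  simp [satCNF_map_unit_iff, funext_iff]

theorem hdiff_false_left {V : Type} [Fintype V] (g : V → Bool) :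
    hdiff (fun _ => false) g = (Finset.univ.filter fun x => g x = true).card := by
  simp only [hdiff, ne_eq, Bool.false_eq, Bool.not_eq_false]

theorem msatYes_pair_iff {V : Type} [Fintype V] (C₁ C₂ : CNF V) (d : ℕ) :
    MSatYes [C₁, C₂] d ↔ ∃ f₁, SatCNF f₁ C₁ ∧ ∃ f₂, SatCNF f₂ C₂ ∧ hdiff f₁ f₂ ≤ d := by
  constructor
  · rintro ⟨f, hsat, hdist⟩
    exact ⟨f 0, hsat 0, f 1, hsat 1, hdist 0 (by simp)⟩
  · rintro ⟨f₁, h₁, f₂, h₂, hd⟩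
    refine ⟨![f₁, f₂], fun i => ?_, fun i hi => ?_⟩
    · fin_cases i <;> assumption
    · obtain rfl : i = 0 := by simp at hi; omega
      exact hd

theorem weighted_twosat_reduction_general {V : Type} [Fintype V] (C : CNF V)
    (k : ℕ) :
    (∃ f : V → Bool, SatCNF f C ∧ (Finset.univ.filter fun x => f x = true).card ≤ k) ↔
    MSatYes [Finset.univ.toList.map fun x : V => [(x, false)], C] k := by
  simp only [msatYes_pair_iff, satCNF_all_negative_iff, exists_eq_left, hdiff_false_left]

theorem weighted_twosat_reduction {V : Type} [Fintype V] (C : CNF V) (h2 : Is2CNF C)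
    (k : ℕ) :
    (∃ f : V → Bool, SatCNF f C ∧ (Finset.univ.filter fun x => f x = true).card ≤ k) ↔
    MSatYes [Finset.univ.toList.map fun x : V => [(x, false)], C] k :=
  weighted_twosat_reduction_general C k
end

section
/- Given a 3-SAT formula C = ⋀_{i=1}^{m} C_i over variables X where each clause C_i has literals ℓ_i^1, ℓ_i^2, ℓ_i^3, construct the Multistage 2-SAT instance over X' = X ∪ {b_1,b_2,b_3} with 2m stages, where for each i the stage 2i−1 has formula C_{¬B} = (¬b_1 ∨ ¬b_2) ∧ (¬b_1 ∨ ¬b_3) ∧ (¬b_2 ∨ ¬b_3) and stage 2i has formula (ℓ_i^1 ∨ b_1) ∧ (ℓ_i^2 ∨ b_2) ∧ (ℓ_i^3 ∨ b_3) ∧ (b_1 ∨ b_2) ∧ (b_1 ∨ b_3) ∧ (b_2 ∨ b_3), and d = 1. Then C is satisfiable if and only if the constructed Multistage 2-SAT instance is a yes-instance. -/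
/-- The formula $C_B$ over $X ∪ \{b_1,b_2,b_3\}$. -/
def CBs (V : Type) : CNF (V ⊕ Fin 3) :=
  [[(Sum.inr 0, true), (Sum.inr 1, true)], [(Sum.inr 0, true), (Sum.inr 2, true)],
   [(Sum.inr 1, true), (Sum.inr 2, true)]]

/-- The formula $C_{\neg B}$ over $X ∪ \{b_1,b_2,b_3\}$. -/
def CnBs (V : Type) : CNF (V ⊕ Fin 3) :=
  [[(Sum.inr 0, false), (Sum.inr 1, false)], [(Sum.inr 0, false), (Sum.inr 2, false)],
   [(Sum.inr 1, false), (Sum.inr 2, false)]]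

/-- The stages of the Multistage 2-SAT instance constructed from a 3-SAT instance with
clauses `L i` (each consisting of the three literals `L i 0, L i 1, L i 2`):
stage `2i-1` (index `2i-2` from zero, i.e. even index) is $C_{\neg B}$, and stage `2i`
(odd index from zero) is $(ℓ_i^1 ∨ b_1) ∧ (ℓ_i^2 ∨ b_2) ∧ (ℓ_i^3 ∨ b_3) ∧ C_B$. -/
def threeSatStage (V : Type) (m : ℕ) (L : Fin m → Fin 3 → V × Bool)
    (j : Fin (2 * m)) : CNF (V ⊕ Fin 3) :=
  if j.val % 2 = 0 then CnBs V
  else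
    (List.ofFn fun r : Fin 3 =>
      [(Sum.inl (L ⟨j.val / 2, by have := j.isLt; omega⟩ r).1,
        (L ⟨j.val / 2, by have := j.isLt; omega⟩ r).2), (Sum.inr r, true)]) ++ CBs V

/-!
The odd stages force at most one `b` to be true and the even stages at least two, so consecutive
assignments always differ on some `b`; with `d = 1` this is their only change, and the assignment
of `X` is the same in all stages. Passing from stage `2i - 1` to stage `2i` flips a single `b`, so
some `b_r` is still false at stage `2i`, and then `(ℓ_i^r ∨ b_r)` makes `ℓ_i^r` true.
Conversely, if `ℓ_i^{r_i}` is true in a satisfying assignment, stage `2i` sets exactly `b_{r_i}`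
false, and stage `2i - 1` sets true the one `b` distinct from `b_{r_{i-1}}` and `b_{r_i}`.
-/

section Hamming

variable {α β : Type} [Fintype α] [Fintype β]

lemma hdiff_comm (f g : α → Bool) : hdiff f g = hdiff g f := by
  simp only [hdiff, ne_comm]

lemma hdiff_eq_zero_iff {f g : α → Bool} : hdiff f g = 0 ↔ f = g := by
  simp [hdiff, Finset.filter_eq_empty_iff, funext_iff]

lemma hdiff_sum (f g : α ⊕ β → Bool) :
    hdiff f g = hdiff (f ∘ Sum.inl) (g ∘ Sum.inl) + hdiff (f ∘ Sum.inr) (g ∘ Sum.inr) := by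
  simp only [hdiff, Finset.card_filter, Fintype.sum_sum_type, Function.comp_apply]

lemma hdiff_sum_elim_left (f : α → Bool) (b b' : β → Bool) :
    hdiff (Sum.elim f b) (Sum.elim f b') = hdiff b b' := by
  rw [hdiff_sum, Sum.elim_comp_inl, Sum.elim_comp_inl, Sum.elim_comp_inr, Sum.elim_comp_inr,
    hdiff_eq_zero_iff.2 rfl, zero_add]

lemma comp_inl_eq_of_hdiff_le_one {g g' : α ⊕ β → Bool} (hne : g ∘ Sum.inr ≠ g' ∘ Sum.inr)
    (h : hdiff g g' ≤ 1) : g ∘ Sum.inl = g' ∘ Sum.inl := by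
  rw [hdiff_sum] at h
  have := hdiff_eq_zero_iff.not.2 hne
  exact hdiff_eq_zero_iff.1 (by omega)

end Hamming

section ThreeBits

def oneHot (s : Fin 3) : Fin 3 → Bool := fun k => decide (k = s)

def allBut (t : Fin 3) : Fin 3 → Bool := fun k => decide (k ≠ t)

lemma subsingleton_oneHot_preimage_true (s : Fin 3) : (oneHot s ⁻¹' {true}).Subsingleton :=
  fun x hx y hy => by simp_all [oneHot]

lemma subsingleton_allBut_preimage_false (t : Fin 3) : (allBut t ⁻¹' {false}).Subsingleton :=
  fun x hx y hy => by simp_all [allBut]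

lemma exists_ne_and_ne (s t : Fin 3) : ∃ u, u ≠ s ∧ u ≠ t := by
  revert s t
  decide

lemma hdiff_oneHot_allBut_le_one {s t : Fin 3} (h : s ≠ t) : hdiff (oneHot s) (allBut t) ≤ 1 := by
  revert s t
  decide

lemma ne_of_subsingleton_preimage {b b' : Fin 3 → Bool} {c : Bool}
    (hb : (b ⁻¹' {c}).Subsingleton) (hb' : (b' ⁻¹' {!c}).Subsingleton) : b ≠ b' := by
  simp only [Set.Subsingleton, Set.mem_preimage, Set.mem_singleton_iff] at hb hb'
  revert b b' c
  decide

lemma exists_eq_false_of_hdiff_le_one {b b' : Fin 3 → Bool}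
    (hb : (b ⁻¹' {true}).Subsingleton) (h : hdiff b b' ≤ 1) : ∃ r, b' r = false := by
  simp only [Set.Subsingleton, Set.mem_preimage, Set.mem_singleton_iff] at hb
  revert b b'
  decide

end ThreeBits

section Stages

variable {V : Type} {m : ℕ} {L : Fin m → Fin 3 → V × Bool}

lemma satCNF_append {f : V → Bool} {C D : CNF V} :
    SatCNF f (C ++ D) ↔ SatCNF f C ∧ SatCNF f D :=
  List.forall_mem_append

lemma satCNF_CnBs_iff (g : V ⊕ Fin 3 → Bool) :
    SatCNF g (CnBs V) ↔ ((g ∘ Sum.inr) ⁻¹' {true}).Subsingleton := by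
  rw [← Sum.elim_comp_inl_inr g, Sum.elim_comp_inr]
  generalize g ∘ Sum.inl = a
  generalize g ∘ Sum.inr = b
  simp only [SatCNF, CnBs, List.forall_mem_cons, List.exists_mem_cons_iff, List.not_mem_nil,
    Sum.elim_inr, Set.Subsingleton, Set.mem_preimage, Set.mem_singleton_iff, false_and,
    exists_false, or_false, IsEmpty.forall_iff, implies_true, and_true]
  revert b
  decide

lemma satCNF_CBs_iff (g : V ⊕ Fin 3 → Bool) :
    SatCNF g (CBs V) ↔ ((g ∘ Sum.inr) ⁻¹' {false}).Subsingleton := by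
  rw [← Sum.elim_comp_inl_inr g, Sum.elim_comp_inr]
  generalize g ∘ Sum.inl = a
  generalize g ∘ Sum.inr = b
  simp only [SatCNF, CBs, List.forall_mem_cons, List.exists_mem_cons_iff, List.not_mem_nil,
    Sum.elim_inr, Set.Subsingleton, Set.mem_preimage, Set.mem_singleton_iff, false_and,
    exists_false, or_false, IsEmpty.forall_iff, implies_true, and_true]
  revert b
  decide

def linkClauses (ℓ : Fin 3 → V × Bool) : CNF (V ⊕ Fin 3) :=
  List.ofFn fun r => [(Sum.inl (ℓ r).1, (ℓ r).2), (Sum.inr r, true)]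

lemma satCNF_linkClauses_iff (g : V ⊕ Fin 3 → Bool) (ℓ : Fin 3 → V × Bool) :
    SatCNF g (linkClauses ℓ) ↔ ∀ r, g (Sum.inl (ℓ r).1) = (ℓ r).2 ∨ g (Sum.inr r) = true := by
  simp only [SatCNF, linkClauses, List.forall_mem_ofFn_iff, List.exists_mem_cons_iff, List.not_mem_nil, false_and, exists_false, or_false]

lemma satCNF_threeSatStage_of_even_iff (g : V ⊕ Fin 3 → Bool) {j : Fin (2 * m)}
    (hj : j.val % 2 = 0) :
    SatCNF g (threeSatStage V m L j) ↔ ((g ∘ Sum.inr) ⁻¹' {true}).Subsingleton := by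
  rw [threeSatStage, if_pos hj, satCNF_CnBs_iff]

lemma satCNF_threeSatStage_of_odd_iff (g : V ⊕ Fin 3 → Bool) {j : Fin (2 * m)}
    (hj : j.val % 2 = 1) :
    SatCNF g (threeSatStage V m L j) ↔
      (∀ r, g (Sum.inl (L ⟨j / 2, Nat.div_lt_of_lt_mul j.isLt⟩ r).1) =
          (L ⟨j / 2, Nat.div_lt_of_lt_mul j.isLt⟩ r).2 ∨ g (Sum.inr r) = true) ∧
        ((g ∘ Sum.inr) ⁻¹' {false}).Subsingleton := by
  rw [threeSatStage, if_neg (by omega), ← linkClauses, satCNF_append, satCNF_linkClauses_iff,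
    satCNF_CBs_iff]

lemma subsingleton_preimage_of_satCNF_threeSatStage {g : V ⊕ Fin 3 → Bool} {j : Fin (2 * m)}
    (h : SatCNF g (threeSatStage V m L j)) :
    ((g ∘ Sum.inr) ⁻¹' {decide (j.val % 2 = 0)}).Subsingleton := by
  rcases Nat.mod_two_eq_zero_or_one j with hj | hj
  · simpa [hj] using (satCNF_threeSatStage_of_even_iff g hj).1 h
  · simpa [hj] using ((satCNF_threeSatStage_of_odd_iff g hj).1 h).2

end Stages

section Reduction

variable {V : Type} [Fintype V] {m : ℕ} {L : Fin m → Fin 3 → V × Bool}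

theorem msatYesF_threeSatStage_of_sat {f : V → Bool} {r : Fin m → Fin 3}
    (hr : ∀ i, f (L i (r i)).1 = (L i (r i)).2) : MSatYesF (2 * m) (threeSatStage V m L) 1 := by
  choose avoid havoid using exists_ne_and_ne
  let R : ℕ → Fin 3 := fun i => if h : i < m then r ⟨i, h⟩ else 0
  -- at `j = 0` the index `j / 2 - 1` truncates to `0`, which is harmless
  let bits : ℕ → Fin 3 → Bool := fun j =>
    if j % 2 = 0 then oneHot (avoid (R (j / 2 - 1)) (R (j / 2))) else allBut (R (j / 2))
  refine ⟨fun j => Sum.elim f (bits j), fun j => ?_, fun j h => ?_⟩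
  · rcases Nat.mod_two_eq_zero_or_one j with hj | hj
    · rw [satCNF_threeSatStage_of_even_iff _ hj]
      simpa [bits, hj] using subsingleton_oneHot_preimage_true _
    · rw [satCNF_threeSatStage_of_odd_iff _ hj]
      have hR : R (j / 2) = r ⟨j / 2, Nat.div_lt_of_lt_mul j.isLt⟩ := dif_pos _
      refine ⟨fun k => ?_, by simpa [bits, hj] using subsingleton_allBut_preimage_false _⟩
      by_cases hk : k = r ⟨j / 2, Nat.div_lt_of_lt_mul j.isLt⟩
      · exact .inl (hk ▸ hr _)
      · exact .inr (by simp [bits, hj, allBut, hR, hk])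
  · simp only [hdiff_sum_elim_left]
    rcases Nat.mod_two_eq_zero_or_one j with hj | hj
    · have hj' : (j + 1) % 2 = 1 := by omega
      simpa [bits, hj, hj', show (j + 1) / 2 = j / 2 by omega]
        using hdiff_oneHot_allBut_le_one (havoid _ _).2
    · have hj' : (j + 1) % 2 = 0 := by omega
      rw [hdiff_comm]
      simpa [bits, hj, hj', show (j + 1) / 2 - 1 = j / 2 by omega]
        using hdiff_oneHot_allBut_le_one (havoid _ _).1

lemma comp_inl_eq_succ {g : Fin (2 * m) → V ⊕ Fin 3 → Bool}
    (hsat : ∀ j, SatCNF (g j) (threeSatStage V m L j))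
    (hstep : ∀ (j : ℕ) (h : j + 1 < 2 * m), hdiff (g ⟨j, Nat.lt_of_succ_lt h⟩) (g ⟨j + 1, h⟩) ≤ 1)
    (j : ℕ) (h : j + 1 < 2 * m) :
    g ⟨j, Nat.lt_of_succ_lt h⟩ ∘ Sum.inl = g ⟨j + 1, h⟩ ∘ Sum.inl := by
  refine comp_inl_eq_of_hdiff_le_one (fun heq => ?_) (hstep j h)
  have h₀ := subsingleton_preimage_of_satCNF_threeSatStage (hsat ⟨j, Nat.lt_of_succ_lt h⟩)
  have h₁ := subsingleton_preimage_of_satCNF_threeSatStage (hsat ⟨j + 1, h⟩)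
  rw [show decide ((j + 1) % 2 = 0) = !decide (j % 2 = 0) by grind] at h₁
  exact ne_of_subsingleton_preimage h₀ h₁ heq

lemma comp_inl_eq_zero {g : Fin (2 * m) → V ⊕ Fin 3 → Bool}
    (hsat : ∀ j, SatCNF (g j) (threeSatStage V m L j))
    (hstep : ∀ (j : ℕ) (h : j + 1 < 2 * m), hdiff (g ⟨j, Nat.lt_of_succ_lt h⟩) (g ⟨j + 1, h⟩) ≤ 1) :
    ∀ (j : ℕ) (h : j < 2 * m), g ⟨j, h⟩ ∘ Sum.inl = g ⟨0, Nat.zero_lt_of_lt h⟩ ∘ Sum.inl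
  | 0, _ => rfl
  | j + 1, h => (comp_inl_eq_succ hsat hstep j h).symm.trans (comp_inl_eq_zero hsat hstep j _)

theorem exists_sat_of_msatYesF_threeSatStage (h : MSatYesF (2 * m) (threeSatStage V m L) 1) :
    ∃ f : V → Bool, ∀ i : Fin m, ∃ r : Fin 3, f (L i r).1 = (L i r).2 := by
  obtain ⟨g, hsat, hstep⟩ := h
  rcases m.eq_zero_or_pos with rfl | hm
  · exact ⟨fun _ => true, fun i => i.elim0⟩
  refine ⟨g ⟨0, by omega⟩ ∘ Sum.inl, fun i => ?_⟩
  have hodd : 2 * i.val + 1 < 2 * m := by omega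
  have hdiff_bits := hstep (2 * i) hodd
  rw [hdiff_sum] at hdiff_bits
  obtain ⟨r, hr⟩ := exists_eq_false_of_hdiff_le_one
    (by simpa using subsingleton_preimage_of_satCNF_threeSatStage (hsat ⟨2 * i, by omega⟩))
    (by omega : hdiff _ (g ⟨2 * i + 1, hodd⟩ ∘ Sum.inr) ≤ 1)
  have hlink := ((satCNF_threeSatStage_of_odd_iff _ (by simp)).1 (hsat ⟨2 * i + 1, hodd⟩)).1 r
  simp only [show (2 * i.val + 1) / 2 = i by omega, Fin.eta] at hlink
  refine ⟨r, ?_⟩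
  rw [← comp_inl_eq_zero hsat hstep _ hodd]
  exact hlink.resolve_right (by simpa using hr)

end Reduction

theorem threeSat_reduction_correct {V : Type} [Fintype V] (m : ℕ)
    (L : Fin m → Fin 3 → V × Bool) :
    (∃ f : V → Bool, ∀ i : Fin m, ∃ r : Fin 3, f (L i r).1 = (L i r).2) ↔
    MSatYesF (2 * m) (threeSatStage V m L) 1 := by
  refine ⟨fun ⟨f, hf⟩ => ?_, exists_sat_of_msatYesF_threeSatStage⟩
  choose r hr using hf
  exact msatYesF_threeSatStage_of_sat hr
end

section
/- In any solution (f_1, …, f_{2m}) of the Multistage 2-SAT instance produced by the 3-SAT reduction with d = 1, for every odd stage index exactly two of the variables b_1, b_2, b_3 are set to false, for every even stage index exactly two of b_1, b_2, b_3 are set to true, and consequently every original variable x ∈ X has the same truth value in all stages. -/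
/-- If two assignments differ on two distinct variables, their Hamming distance exceeds 1. -/
lemma MS_no_two_diff {V : Type} [Fintype V] {f g : V → Bool} (h : hdiff f g ≤ 1)
    {u v : V} (huv : u ≠ v) (hu : f u ≠ g u) (hv : f v ≠ g v) : False := by
  have h2 : 1 < (Finset.univ.filter fun x => f x ≠ g x).card :=
    Finset.one_lt_card.mpr ⟨u, by simp [hu], v, by simp [hv], huv⟩
  unfold hdiff at h; omega

lemma MS_card3_true (p : Fin 3 → Bool) :
    (Finset.univ.filter fun r => p r = true).card = (p 0).toNat + (p 1).toNat + (p 2).toNat := by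
  rw [Finset.card_filter, Fin.sum_univ_three]
  cases p 0 <;> cases p 1 <;> cases p 2 <;> simp

lemma MS_card3_false (p : Fin 3 → Bool) :
    (Finset.univ.filter fun r => p r = false).card
      = (!p 0).toNat + (!p 1).toNat + (!p 2).toNat := by
  rw [Finset.card_filter, Fin.sum_univ_three]
  cases p 0 <;> cases p 1 <;> cases p 2 <;> simp

lemma MS_decide (a0 a1 a2 b0 b1 b2 : Bool)
    (ha : (a0 = false ∨ a1 = false) ∧ (a0 = false ∨ a2 = false) ∧ (a1 = false ∨ a2 = false))
    (hb : (b0 = true ∨ b1 = true) ∧ (b0 = true ∨ b2 = true) ∧ (b1 = true ∨ b2 = true))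
    (hdf : ¬(a0 ≠ b0 ∧ a1 ≠ b1) ∧ ¬(a0 ≠ b0 ∧ a2 ≠ b2) ∧ ¬(a1 ≠ b1 ∧ a2 ≠ b2)) :
    ((!a0).toNat + (!a1).toNat + (!a2).toNat = 2) ∧
      (b0.toNat + b1.toNat + b2.toNat = 2) ∧
      (a0 ≠ b0 ∨ a1 ≠ b1 ∨ a2 ≠ b2) := by
  revert ha hb hdf
  cases a0 <;> cases a1 <;> cases a2 <;> cases b0 <;> cases b1 <;> cases b2 <;> decide

theorem threeSat_reduction_solution_structure {V : Type} [Fintype V] (m : ℕ)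
    (L : Fin m → Fin 3 → V × Bool) (f : Fin (2 * m) → (V ⊕ Fin 3) → Bool)
    (hsat : ∀ j, SatCNF (f j) (threeSatStage V m L j))
    (hd : ∀ (i : ℕ) (h : i + 1 < 2 * m),
      hdiff (f ⟨i, Nat.lt_of_succ_lt h⟩) (f ⟨i + 1, h⟩) ≤ 1) :
    (∀ j : Fin (2 * m),
      (j.val % 2 = 0 →
        (Finset.univ.filter fun r : Fin 3 => f j (Sum.inr r) = false).card = 2) ∧
      (j.val % 2 = 1 →
        (Finset.univ.filter fun r : Fin 3 => f j (Sum.inr r) = true).card = 2)) ∧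
    ∀ (x : V) (j j' : Fin (2 * m)), f j (Sum.inl x) = f j' (Sum.inl x) := by
  -- facts from the even-index (CnBs) stages
  have evenF : ∀ (j : Fin (2 * m)), j.val % 2 = 0 →
      (f j (Sum.inr 0) = false ∨ f j (Sum.inr 1) = false) ∧
      (f j (Sum.inr 0) = false ∨ f j (Sum.inr 2) = false) ∧
      (f j (Sum.inr 1) = false ∨ f j (Sum.inr 2) = false) := by
    intro j hj
    have hs := hsat j
    simp only [threeSatStage, if_pos hj] at hs
    have e1 := hs [(Sum.inr 0, false), (Sum.inr 1, false)] (by simp [CnBs])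
    have e2 := hs [(Sum.inr 0, false), (Sum.inr 2, false)] (by simp [CnBs])
    have e3 := hs [(Sum.inr 1, false), (Sum.inr 2, false)] (by simp [CnBs])
    simp at e1 e2 e3
    exact ⟨e1, e2, e3⟩
  -- facts from the odd-index stages (which contain CBs)
  have oddF : ∀ (j : Fin (2 * m)), ¬ (j.val % 2 = 0) →
      (f j (Sum.inr 0) = true ∨ f j (Sum.inr 1) = true) ∧
      (f j (Sum.inr 0) = true ∨ f j (Sum.inr 2) = true) ∧
      (f j (Sum.inr 1) = true ∨ f j (Sum.inr 2) = true) := by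
    intro j hj
    have hs := hsat j
    simp only [threeSatStage, if_neg hj] at hs
    have e1 := hs [(Sum.inr 0, true), (Sum.inr 1, true)] (by simp [CBs])
    have e2 := hs [(Sum.inr 0, true), (Sum.inr 2, true)] (by simp [CBs])
    have e3 := hs [(Sum.inr 1, true), (Sum.inr 2, true)] (by simp [CBs])
    simp at e1 e2 e3
    exact ⟨e1, e2, e3⟩
  -- no two distinct b-variables (nor a b-variable and an x-variable) can both flip
  have nodiff : ∀ (i : ℕ) (h : i + 1 < 2 * m) (u v : V ⊕ Fin 3), u ≠ v →
      ¬(f ⟨i, Nat.lt_of_succ_lt h⟩ u ≠ f ⟨i + 1, h⟩ u ∧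
        f ⟨i, Nat.lt_of_succ_lt h⟩ v ≠ f ⟨i + 1, h⟩ v) := by
    intro i h u v huv ⟨p, q⟩
    exact MS_no_two_diff (hd i h) huv p q
  -- key structural lemma at an even/odd consecutive pair
  have key : ∀ (i : ℕ) (h : i + 1 < 2 * m), i % 2 = 0 →
      ((!(f ⟨i, Nat.lt_of_succ_lt h⟩ (Sum.inr 0))).toNat +
        (!(f ⟨i, Nat.lt_of_succ_lt h⟩ (Sum.inr 1))).toNat +
        (!(f ⟨i, Nat.lt_of_succ_lt h⟩ (Sum.inr 2))).toNat = 2) ∧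
      ((f ⟨i + 1, h⟩ (Sum.inr 0)).toNat + (f ⟨i + 1, h⟩ (Sum.inr 1)).toNat +
        (f ⟨i + 1, h⟩ (Sum.inr 2)).toNat = 2) ∧
      (f ⟨i, Nat.lt_of_succ_lt h⟩ (Sum.inr 0) ≠ f ⟨i + 1, h⟩ (Sum.inr 0) ∨
       f ⟨i, Nat.lt_of_succ_lt h⟩ (Sum.inr 1) ≠ f ⟨i + 1, h⟩ (Sum.inr 1) ∨
       f ⟨i, Nat.lt_of_succ_lt h⟩ (Sum.inr 2) ≠ f ⟨i + 1, h⟩ (Sum.inr 2)) := by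
    intro i h hi
    have ha := evenF ⟨i, Nat.lt_of_succ_lt h⟩ hi
    have hb := oddF ⟨i + 1, h⟩ (by simp; omega)
    exact MS_decide _ _ _ _ _ _ ha hb
      ⟨nodiff i h _ _ (by simp), nodiff i h _ _ (by simp), nodiff i h _ _ (by simp)⟩
  -- same but for a pair starting at an odd index
  have key2 : ∀ (i : ℕ) (h : i + 1 < 2 * m), i % 2 = 1 →
      (f ⟨i, Nat.lt_of_succ_lt h⟩ (Sum.inr 0) ≠ f ⟨i + 1, h⟩ (Sum.inr 0) ∨
       f ⟨i, Nat.lt_of_succ_lt h⟩ (Sum.inr 1) ≠ f ⟨i + 1, h⟩ (Sum.inr 1) ∨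
       f ⟨i, Nat.lt_of_succ_lt h⟩ (Sum.inr 2) ≠ f ⟨i + 1, h⟩ (Sum.inr 2)) := by
    intro i h hi
    have ha := evenF ⟨i + 1, h⟩ (by simp; omega)
    have hb := oddF ⟨i, Nat.lt_of_succ_lt h⟩ (by simp; omega)
    have hdf : ∀ (u v : V ⊕ Fin 3), u ≠ v →
        ¬(f ⟨i + 1, h⟩ u ≠ f ⟨i, Nat.lt_of_succ_lt h⟩ u ∧
          f ⟨i + 1, h⟩ v ≠ f ⟨i, Nat.lt_of_succ_lt h⟩ v) := by
      intro u v huv ⟨p, q⟩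
      exact nodiff i h u v huv ⟨Ne.symm p, Ne.symm q⟩
    have := (MS_decide _ _ _ _ _ _ ha hb
      ⟨hdf _ _ (by simp), hdf _ _ (by simp), hdf _ _ (by simp)⟩).2.2
    rcases this with p | p | p
    · exact Or.inl (Ne.symm p)
    · exact Or.inr (Or.inl (Ne.symm p))
    · exact Or.inr (Or.inr (Ne.symm p))
  -- consecutive stages agree on all original variables
  have consec : ∀ (i : ℕ) (h : i + 1 < 2 * m) (x : V),
      f ⟨i, Nat.lt_of_succ_lt h⟩ (Sum.inl x) = f ⟨i + 1, h⟩ (Sum.inl x) := by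
    intro i h x
    by_contra hne
    have hdiffb : ∃ r : Fin 3,
        f ⟨i, Nat.lt_of_succ_lt h⟩ (Sum.inr r) ≠ f ⟨i + 1, h⟩ (Sum.inr r) := by
      rcases Nat.mod_two_eq_zero_or_one i with hi | hi
      · rcases (key i h hi).2.2 with p | p | p
        exacts [⟨0, p⟩, ⟨1, p⟩, ⟨2, p⟩]
      · rcases key2 i h hi with p | p | p
        exacts [⟨0, p⟩, ⟨1, p⟩, ⟨2, p⟩]
    obtain ⟨r, hr⟩ := hdiffb
    exact nodiff i h (Sum.inl x) (Sum.inr r) (by simp) ⟨hne, hr⟩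
  -- hence all stages agree on all original variables
  have mono : ∀ (x : V) (a b : ℕ) (hab : a ≤ b) (hb : b < 2 * m),
      f ⟨a, lt_of_le_of_lt hab hb⟩ (Sum.inl x) = f ⟨b, hb⟩ (Sum.inl x) := by
    intro x a b hab
    induction b, hab using Nat.le_induction with
    | base => intro hb; rfl
    | succ b hab ih =>
      intro hb
      exact (ih (by omega)).trans (consec b hb x)
  constructor
  · intro j
    constructor
    · intro hj
      have h : j.val + 1 < 2 * m := by have := j.isLt; omega
      have := (key j.val h hj).1
      rw [MS_card3_false (fun r => f j (Sum.inr r))]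
      simpa using this
    · intro hj
      have h1 : 1 ≤ j.val := by omega
      have h : (j.val - 1) + 1 < 2 * m := by have := j.isLt; omega
      have hje : (⟨j.val - 1 + 1, h⟩ : Fin (2 * m)) = j := by
        apply Fin.ext; simp; omega
      have := (key (j.val - 1) h (by omega)).2.1
      rw [hje] at this
      rw [MS_card3_true (fun r => f j (Sum.inr r))]
      simpa using this
  · intro x j j'
    rcases le_total j.val j'.val with hle | hle
    · have := mono x j.val j'.val hle j'.isLt
      simpa using this
    · have := mono x j'.val j.val hle j.isLt
      simpa using this.symm
end

section
/- Let G be a k-partite graph with vertex classes V^1, …, V^k and total vertex set V of size n. Introduce a variable x_v for each vertex v, let φ_1 = ⋀_{v ∈ V} (x_v) (all unit positive clauses), and let φ_2 be the conjunction of clauses (¬x_u ∨ ¬x_w) for every edge {u,w} ∈ E and for every pair of distinct vertices u, w in the same class V^i. Then G has an independent set containing exactly one vertex from each class if and only if there are satisfying assignments f_1 of φ_1 and f_2 of φ_2 differing on at most n − k variables. -/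
theorem mis_reduction_correct {V : Type} [Fintype V] [DecidableEq V] (k : ℕ)
    (G : SimpleGraph V) (c : V → Fin k) (hc : Function.Surjective c) :
    (∃ S : Finset V, (∀ u ∈ S, ∀ w ∈ S, ¬ G.Adj u w) ∧
      ∀ i : Fin k, (S.filter fun v => c v = i).card = 1) ↔
    (∃ f₁ f₂ : V → Bool, (∀ v, f₁ v = true) ∧
      (∀ u w : V, (G.Adj u w ∨ (u ≠ w ∧ c u = c w)) →
        ¬(f₂ u = true ∧ f₂ w = true)) ∧
      hdiff f₁ f₂ ≤ Fintype.card V - k) := by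
  constructor
  · rintro ⟨S, hind, hone⟩
    have hScard : S.card = k := by
      have := Finset.card_eq_sum_card_fiberwise
        (f := c) (s := S) (t := Finset.univ) (fun x _ => Finset.mem_univ _)
      simp [this, hone]
    refine ⟨fun _ => true, fun v => v ∈ S, fun _ => rfl, ?_, ?_⟩
    · rintro u w h ⟨hu, hw⟩
      simp only [decide_eq_true_eq] at hu hw
      rcases h with h | ⟨hne, hcw⟩
      · exact hind u hu w hw h
      · have h2 : 1 < (S.filter fun v => c v = c w).card := by
          apply Finset.one_lt_card.mpr
          exact ⟨u, Finset.mem_filter.mpr ⟨hu, hcw⟩, w,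
            Finset.mem_filter.mpr ⟨hw, rfl⟩, hne⟩
        rw [hone (c w)] at h2
        exact absurd h2 (lt_irrefl 1)
    · have heq : (Finset.univ.filter fun x => (true : Bool) ≠ decide (x ∈ S)) = Sᶜ := by
        ext x
        simp [Finset.mem_compl, eq_comm]
      rw [hdiff, heq, Finset.card_compl, hScard]
  · rintro ⟨f₁, f₂, h1, h2, hd⟩
    set S : Finset V := Finset.univ.filter fun v => f₂ v = true with hS
    have hle1 : ∀ i : Fin k, (S.filter fun v => c v = i).card ≤ 1 := by
      intro i
      apply Finset.card_le_one.mpr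
      intro a ha b hb
      simp only [hS, Finset.mem_filter, Finset.mem_univ, true_and] at ha hb
      by_contra hab
      exact h2 a b (Or.inr ⟨hab, ha.2.trans hb.2.symm⟩) ⟨ha.1, hb.1⟩
    have hsum : S.card = ∑ i : Fin k, (S.filter fun v => c v = i).card :=
      Finset.card_eq_sum_card_fiberwise (fun x _ => Finset.mem_univ _)
    have hkn : k ≤ Fintype.card V := by
      simpa using Fintype.card_le_of_surjective c hc
    have hdeq : hdiff f₁ f₂ = Fintype.card V - S.card := by
      have heq : (Finset.univ.filter fun x => f₁ x ≠ f₂ x) = Sᶜ := by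
        ext x
        cases hfx : f₂ x <;> simp [hS, h1 x, hfx]
      rw [hdiff, heq, Finset.card_compl]
    have hSn : S.card ≤ Fintype.card V := Finset.card_le_univ S
    have hSk : k ≤ S.card := by
      rw [hdeq] at hd; omega
    have hsum_le : ∑ i : Fin k, (S.filter fun v => c v = i).card ≤ ∑ _i : Fin k, 1 :=
      Finset.sum_le_sum (fun i _ => hle1 i)
    have hsum_eq : ∑ i : Fin k, (S.filter fun v => c v = i).card = ∑ _i : Fin k, 1 := by
      have : (∑ _i : Fin k, 1) = k := by simp
      omega
    refine ⟨S, ?_, ?_⟩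
    · intro u hu w hw hadj
      simp only [hS, Finset.mem_filter, Finset.mem_univ, true_and] at hu hw
      exact h2 u w (Or.inl hadj) ⟨hu, hw⟩
    · intro i
      exact ((Finset.sum_eq_sum_iff_of_le (fun i _ => hle1 i)).mp hsum_eq) i (Finset.mem_univ i)
end

section
/- Let I_1, …, I_t be Multistage 2-SAT instances, each with d = 1, the same variable set X = {x_1,…,x_n}, and each with τ stages. Form a single instance I with d = 1 over X by concatenating the stage sequences of I_1, …, I_t, inserting between consecutive instances n buffer stages each consisting of the tautological formula (x_1 ∨ ¬x_1). Then I is a yes-instance if and only if every I_i is a yes-instance. -/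
/-! Restricting a witness sequence to the stages of one block gives a witness for that block.
Conversely, the `n` tautological buffer stages between two blocks accept every assignment, so
they can carry a walk from the last assignment of one block to the first of the next that
switches the variables one at a time, in a fixed enumeration of `X`. -/

namespace List

variable {α : Type*} {R : α → α → Prop}

theorem IsChain.append_path_append (hR : ∀ x, R x x) {l₁ p l₂ : List α} {a b : α}
    (h₁ : IsChain R l₁) (h₂ : IsChain R l₂) (hp : IsChain R (a :: p))
    (hpb : (a :: p).getLast (cons_ne_nil a p) = b)
    (ha : ∀ x ∈ l₁.getLast?, x = a) (hb : ∀ y ∈ l₂.head?, y = b) :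
    IsChain R (l₁ ++ p ++ l₂) := by
  rw [append_assoc]
  refine h₁.append (hp.tail.append h₂ fun x hx y hy => ?_) fun x hx y hy => ?_
  · have hxb : x = b := by
      rw [tail_cons, Option.mem_def] at hx
      rw [← hpb, ← Option.some_inj, ← getLast?_eq_some_getLast, getLast?_cons, hx,
        Option.getD_some]
    rw [hxb, hb y hy]
    exact hR b
  · rw [ha x hx]
    cases p with
    | nil =>
      rw [getLast_singleton] at hpb
      rw [hpb, hb y (by simpa using hy)]
      exact hR b
    | cons c p =>
      obtain rfl : c = y := by simpa using hy
      exact (isChain_cons_cons.1 hp).1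

end List

section Hamming

variable {ι β : Type*} [Fintype ι] [DecidableEq β]

theorem exists_isChain_hammingDist_le_one (a b : ι → β) {m : ℕ} (hm : Fintype.card ι ≤ m) :
    ∃ p : List (ι → β), p.length = m ∧
      (a :: p).IsChain (fun f g => hammingDist f g ≤ 1) ∧
      (a :: p).getLast (List.cons_ne_nil a p) = b := by
  classical
  let e := Fintype.equivFin ι
  let mix (k : ℕ) (i : ι) : β := if (e i : ℕ) < k then b i else a i
  have hstep (k : ℕ) : hammingDist (mix k) (mix (k + 1)) ≤ 1 := by
    have hk (i : ι) (hi : mix k i ≠ mix (k + 1) i) : (e i : ℕ) = k := by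
      by_contra hne
      exact hi (by simp only [mix]; split_ifs <;> first | rfl | omega)
    refine Finset.card_le_one.2 fun i hi j hj => e.injective (Fin.ext ?_)
    simp only [Finset.mem_filter, Finset.mem_univ, true_and] at hi hj
    rw [hk i hi, hk j hj]
  have hpath : a :: List.ofFn (fun k : Fin m => mix (k + 1)) =
      List.ofFn fun k : Fin (m + 1) => mix k := by
    rw [List.ofFn_succ]
    simp [mix]
  refine ⟨List.ofFn fun k : Fin m => mix (k + 1), List.length_ofFn, ?_, ?_⟩
  · rw [hpath, List.isChain_ofFn]
    exact fun k _ => hstep k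
  · simp only [hpath, List.getLast_ofFn]
    funext i
    simp [mix, (e i).isLt.trans_le hm]

end Hamming

theorem satCNF_excludedMiddle {V : Type} (f : V → Bool) (x : V) :
    SatCNF f [[(x, true), (x, false)]] := by
  intro cl hcl
  rw [List.mem_singleton.1 hcl]
  cases hfx : f x
  · exact ⟨(x, false), by simp, hfx⟩
  · exact ⟨(x, true), by simp, hfx⟩

section MultistageSAT

variable {V : Type} [Fintype V]

theorem hdiff_eq_hammingDist (f g : V → Bool) : hdiff f g = hammingDist f g := rfl

theorem msatYes_iff_exists_list {Φ : List (CNF V)} {d : ℕ} :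
    MSatYes Φ d ↔ ∃ fs : List (V → Bool),
      List.Forall₂ SatCNF fs Φ ∧ fs.IsChain (fun f g => hammingDist f g ≤ d) := by
  simp only [MSatYes, hdiff_eq_hammingDist]
  constructor
  · rintro ⟨f, hsat, hstep⟩
    refine ⟨List.ofFn f, List.forall₂_iff_get.2 ⟨List.length_ofFn, fun i _ hi => ?_⟩,
      List.isChain_ofFn.2 hstep⟩
    simpa using hsat ⟨i, hi⟩
  · rintro ⟨fs, hsat, hchain⟩
    have hlen := hsat.length_eq
    exact ⟨fun i => fs[i.1], fun i => (List.forall₂_iff_get.1 hsat).2 i _ i.2,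
      fun i hi => hchain.getElem i (by omega)⟩

theorem msatYes_nil (d : ℕ) : MSatYes ([] : List (CNF V)) d :=
  msatYes_iff_exists_list.2 ⟨[], .nil, .nil⟩

theorem MSatYes.of_append {Φ Ψ : List (CNF V)} {d : ℕ} (h : MSatYes (Φ ++ Ψ) d) :
    MSatYes Φ d ∧ MSatYes Ψ d := by
  obtain ⟨fs, hsat, hchain⟩ := msatYes_iff_exists_list.1 h
  rw [← List.take_append_drop Φ.length fs] at hchain
  exact ⟨msatYes_iff_exists_list.2 ⟨_, List.forall₂_take_append fs Φ Ψ hsat, hchain.left_of_append⟩,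
    msatYes_iff_exists_list.2 ⟨_, List.forall₂_drop_append fs Φ Ψ hsat, hchain.right_of_append⟩⟩

theorem MSatYes.append_append_of_forall_satCNF {A B L : List (CNF V)} (hA : MSatYes A 1)
    (hL : MSatYes L 1) (hB : ∀ C ∈ B, ∀ f, SatCNF f C) (hcard : Fintype.card V ≤ B.length) :
    MSatYes (A ++ B ++ L) 1 := by
  obtain ⟨fsA, hsatA, hchainA⟩ := msatYes_iff_exists_list.1 hA
  obtain ⟨fsL, hsatL, hchainL⟩ := msatYes_iff_exists_list.1 hL
  let b := fsL.headD fun _ => true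
  let a := fsA.getLastD b
  obtain ⟨p, hp, hchainp, hpb⟩ := exists_isChain_hammingDist_le_one a b hcard
  have hsatp : List.Forall₂ SatCNF p B :=
    List.forall₂_iff_get.2 ⟨hp, fun i _ hi => hB _ (List.get_mem B ⟨i, hi⟩) _⟩
  refine msatYes_iff_exists_list.2 ⟨fsA ++ p ++ fsL,
    List.rel_append (List.rel_append hsatA hsatp) hsatL,
    hchainA.append_path_append (fun f => by simp) hchainL hchainp hpb ?_ ?_⟩
  · intro x hx
    simp [a, List.getLastD_eq_getLast?, Option.mem_def.1 hx]
  · intro y hy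
    simp [b, Option.mem_def.1 hy]

theorem msatYes_append_append_iff {A B L : List (CNF V)} (hB : ∀ C ∈ B, ∀ f, SatCNF f C)
    (hcard : Fintype.card V ≤ B.length) :
    MSatYes (A ++ B ++ L) 1 ↔ MSatYes A 1 ∧ MSatYes L 1 :=
  ⟨fun h => ⟨h.of_append.1.of_append.1, h.of_append.2⟩,
    fun ⟨hA, hL⟩ => hA.append_append_of_forall_satCNF hL hB hcard⟩

theorem msatYes_flatten_ofFn_append_iff {t : ℕ} (Φs : Fin t → List (CNF V)) {B : List (CNF V)}
    (hB : ∀ C ∈ B, ∀ f, SatCNF f C) (hcard : Fintype.card V ≤ B.length) :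
    MSatYes (List.ofFn (fun i => Φs i ++ B)).flatten 1 ↔ ∀ i, MSatYes (Φs i) 1 := by
  induction t with
  | zero => simpa using msatYes_nil 1
  | succ t ih =>
    rw [List.ofFn_succ, List.flatten_cons, msatYes_append_append_iff hB hcard,
      ih, Fin.forall_fin_succ]

end MultistageSAT

theorem and_composition_correct_general {V : Type} [Fintype V] (x₀ : V) (t : ℕ)
    (Φs : Fin t → List (CNF V)) :
    MSatYes ((List.ofFn fun i : Fin t =>
        Φs i ++ List.replicate (Fintype.card V) [[(x₀, true), (x₀, false)]]).flatten) 1 ↔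
    ∀ i : Fin t, MSatYes (Φs i) 1 :=
  msatYes_flatten_ofFn_append_iff Φs
    (fun _ hC f => List.eq_of_mem_replicate hC ▸ satCNF_excludedMiddle f x₀)
    (List.length_replicate ..).ge

theorem and_composition_correct {V : Type} [Fintype V] (x₀ : V) (t τ : ℕ)
    (Φs : Fin t → List (CNF V)) (hlen : ∀ i, (Φs i).length = τ) :
    MSatYes ((List.ofFn fun i : Fin t =>
        Φs i ++ List.replicate (Fintype.card V) [[(x₀, true), (x₀, false)]]).flatten) 1 ↔
    ∀ i : Fin t, MSatYes (Φs i) 1 :=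
  and_composition_correct_general x₀ t Φs
end
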